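/- Functional progress of the composite step: let f : E → ℝ be twice continuously differentiable with L-Lipschitz-continuous Hessian (L > 0), ψ : E → ℝ convex, x ∈ E, s a subgradient of ψ at x, H a symmetric positive semidefinite linear map with ‖H − ∇²f(x)‖ ≤ β for some β ≥ 0, and let α ≥ √(L‖∇f(x) + s‖/3) + β with α > 0. If x⁺ is a composite step from x with parameters (H, α) and r := ‖x⁺ − x‖, then F(x) − F(x⁺) ≥ (α/2)·r², where F := f + ψ. -/

import Mathlib

open scoped RealInnerProductSpace
open Real Set

def IsSymmPSD {n : ℕ} (H : EuclideanSpace ℝ (Fin n) →L[ℝ] EuclideanSpace ℝ (Fin n)) : Prop :=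
  (∀ u v, ⟪H u, v⟫ = ⟪u, H v⟫) ∧ ∀ u, 0 ≤ ⟪H u, u⟫

def IsSubgradAt {n : ℕ} (ψ : EuclideanSpace ℝ (Fin n) → ℝ)
    (s x : EuclideanSpace ℝ (Fin n)) : Prop :=
  ∀ y, ψ x + ⟪s, y - x⟫ ≤ ψ y

def CompositeStep {n : ℕ} (g : EuclideanSpace ℝ (Fin n))
    (H : EuclideanSpace ℝ (Fin n) →L[ℝ] EuclideanSpace ℝ (Fin n)) (α : ℝ)
    (ψ : EuclideanSpace ℝ (Fin n) → ℝ) (x xp : EuclideanSpace ℝ (Fin n)) : Prop :=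
  ∀ y, ψ xp ≤ ⟪g + (H (xp - x) + α • (xp - x)), y - xp⟫ + ψ y

/-- The Hessian of `f` at `x`, as the derivative of the gradient map. -/
noncomputable def hess {n : ℕ} (f : EuclideanSpace ℝ (Fin n) → ℝ)
    (x : EuclideanSpace ℝ (Fin n)) :
    EuclideanSpace ℝ (Fin n) →L[ℝ] EuclideanSpace ℝ (Fin n) :=
  fderiv ℝ (gradient f) x

/-!
Write `h = x⁺ - x` and `r = ‖h‖`. Testing the optimality condition of the step at `y = x` gives
`ψ x - ψ x⁺ ≥ ⟪∇f x, h⟫ + ⟪H h, h⟫ + α r²`; adding the subgradient inequality at `x⁺` and using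
`H ⪰ 0` bounds the step length by `α r ≤ ‖∇f x + s‖`. The cubic Taylor bound for a function with
Lipschitz Hessian, combined with `‖H - ∇²f x‖ ≤ β`, then leaves
`F x - F x⁺ ≥ (α - β / 2) r² - L r³ / 6`, and the step-length bound together with
`α ≥ √(L ‖∇f x + s‖ / 3) + β` gives `L r / 3 ≤ α - β`.
-/

theorem norm_le_of_norm_deriv_le_mul_pow {F : Type*} [NormedAddCommGroup F] [NormedSpace ℝ F]
    {g g' : ℝ → F} {C : ℝ} {k : ℕ} (hg : ∀ t, HasDerivAt g (g' t) t) (hg0 : g 0 = 0)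
    (hbound : ∀ t, 0 ≤ t → ‖g' t‖ ≤ C * t ^ k) {t : ℝ} (ht : 0 ≤ t) :
    ‖g t‖ ≤ C * t ^ (k + 1) / (k + 1) := by
  have hB : ∀ s : ℝ, HasDerivAt (fun s => C * s ^ (k + 1) / (k + 1)) (C * s ^ k) s := fun s =>
    ((hasDerivAt_pow (k + 1) s).const_mul C).div_const ((k : ℝ) + 1) |>.congr_deriv <| by
      rw [Nat.add_sub_cancel]; push_cast; field_simp
  refine image_norm_le_of_norm_deriv_right_le_deriv_boundary
    (fun s _ => (hg s).continuousAt.continuousWithinAt) (fun s _ => (hg s).hasDerivWithinAt)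
    (by simp [hg0]) hB (fun s hs => hbound s hs.1) ⟨ht, le_rfl⟩

theorem hasDerivAt_add_smul {E : Type*} [NormedAddCommGroup E] [NormedSpace ℝ E]
    (x h : E) (t : ℝ) : HasDerivAt (fun t : ℝ => x + t • h) h t := by
  simpa using ((hasDerivAt_id t).smul_const h).const_add x

theorem ContDiff.differentiable_gradient {E : Type*} [NormedAddCommGroup E]
    [InnerProductSpace ℝ E] [CompleteSpace E] {f : E → ℝ} (hf : ContDiff ℝ 2 f) :
    Differentiable ℝ (gradient f) :=
  (InnerProductSpace.toDual ℝ E).symm.differentiable.comp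
    ((hf.fderiv_right (m := 1) (by norm_num)).differentiable one_ne_zero)

theorem ContinuousLinearMap.inner_apply_le_of_norm_sub_le {E : Type*} [NormedAddCommGroup E]
    [InnerProductSpace ℝ E] {A B : E →L[ℝ] E} {β : ℝ} (hAB : ‖A - B‖ ≤ β) (h : E) :
    ⟪A h, h⟫ ≤ ⟪B h, h⟫ + β * ‖h‖ ^ 2 := by
  have : ⟪(A - B) h, h⟫ ≤ β * ‖h‖ ^ 2 :=
    calc ⟪(A - B) h, h⟫ ≤ ‖(A - B) h‖ * ‖h‖ := real_inner_le_norm _ _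
      _ ≤ ‖A - B‖ * ‖h‖ * ‖h‖ := by gcongr; exact (A - B).le_opNorm h
      _ ≤ β * ‖h‖ ^ 2 := by nlinarith [norm_nonneg h]
  rw [sub_apply, inner_sub_left] at this
  linarith

section Taylor

variable {E : Type*} [NormedAddCommGroup E] [InnerProductSpace ℝ E] [CompleteSpace E]
  {f : E → ℝ} {L : ℝ} {x : E}

theorem norm_gradient_sub_sub_le (hf : Differentiable ℝ (gradient f))
    (hLip : ∀ y, ‖fderiv ℝ (gradient f) y - fderiv ℝ (gradient f) x‖ ≤ L * ‖y - x‖)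
    (h : E) {t : ℝ} (ht : 0 ≤ t) :
    ‖gradient f (x + t • h) - gradient f x - t • fderiv ℝ (gradient f) x h‖
      ≤ L * ‖h‖ ^ 2 * t ^ 2 / 2 := by
  set D := fderiv ℝ (gradient f)
  have hderiv : ∀ t : ℝ, HasDerivAt (fun t => gradient f (x + t • h) - gradient f x - t • D x h)
      (D (x + t • h) h - D x h) t := fun t =>
    (((hf _).hasFDerivAt.comp_hasDerivAt t (hasDerivAt_add_smul x h t)).sub_const _).sub
      (by simpa using (hasDerivAt_id t).smul_const (D x h))
  have hbound : ∀ t : ℝ, 0 ≤ t → ‖D (x + t • h) h - D x h‖ ≤ L * ‖h‖ ^ 2 * t ^ 1 := by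
    intro t ht
    calc ‖D (x + t • h) h - D x h‖ = ‖(D (x + t • h) - D x) h‖ := rfl
      _ ≤ ‖D (x + t • h) - D x‖ * ‖h‖ := ContinuousLinearMap.le_opNorm _ _
      _ ≤ L * ‖(x + t • h) - x‖ * ‖h‖ := by gcongr; exact hLip _
      _ = L * ‖h‖ ^ 2 * t ^ 1 := by
        rw [add_sub_cancel_left, norm_smul, norm_of_nonneg ht]; ring
  convert norm_le_of_norm_deriv_le_mul_pow hderiv (by simp) hbound ht using 1
  norm_num

theorem abs_taylor_remainder_le (hf : Differentiable ℝ f) (hf' : Differentiable ℝ (gradient f))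
    (hLip : ∀ y, ‖fderiv ℝ (gradient f) y - fderiv ℝ (gradient f) x‖ ≤ L * ‖y - x‖) (h : E) :
    |f (x + h) - f x - ⟪gradient f x, h⟫ - ⟪fderiv ℝ (gradient f) x h, h⟫ / 2|
      ≤ L * ‖h‖ ^ 3 / 6 := by
  set D := fderiv ℝ (gradient f)
  have hderiv : ∀ t : ℝ,
      HasDerivAt (fun t => f (x + t • h) - f x - t * ⟪gradient f x, h⟫ - t ^ 2 / 2 * ⟪D x h, h⟫)
        ⟪gradient f (x + t • h) - gradient f x - t • D x h, h⟫ t := by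
    intro t
    have hline := (hf _).hasFDerivAt.comp_hasDerivAt t (hasDerivAt_add_smul x h t)
    refine ((hline.sub_const _).sub ((hasDerivAt_id t).mul_const _)).sub
      ((((hasDerivAt_pow 2 t).div_const 2).mul_const _)) |>.congr_deriv ?_
    simp only [← inner_gradient_left, inner_sub_left, real_inner_smul_left]
    simp
  have hbound : ∀ t : ℝ, 0 ≤ t →
      ‖⟪gradient f (x + t • h) - gradient f x - t • D x h, h⟫‖ ≤ L * ‖h‖ ^ 3 / 2 * t ^ 2 := by
    intro t ht
    calc ‖⟪gradient f (x + t • h) - gradient f x - t • D x h, h⟫‖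
        ≤ ‖gradient f (x + t • h) - gradient f x - t • D x h‖ * ‖h‖ := norm_inner_le_norm _ _
      _ ≤ L * ‖h‖ ^ 2 * t ^ 2 / 2 * ‖h‖ := by
        gcongr; exact norm_gradient_sub_sub_le hf' hLip h ht
      _ = L * ‖h‖ ^ 3 / 2 * t ^ 2 := by ring
  have := norm_le_of_norm_deriv_le_mul_pow hderiv (by simp) hbound zero_le_one
  simp only [one_smul, one_mul, one_pow, mul_one, Real.norm_eq_abs] at this
  rw [div_eq_inv_mul _ (2 : ℝ), ← one_div]
  exact this.trans_eq (by norm_num; ring)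

end Taylor

section CompositeStep

variable {n : ℕ} {g s x xp : EuclideanSpace ℝ (Fin n)}
  {H : EuclideanSpace ℝ (Fin n) →L[ℝ] EuclideanSpace ℝ (Fin n)} {α : ℝ}
  {ψ : EuclideanSpace ℝ (Fin n) → ℝ}

theorem CompositeStep.inner_add_le_sub (hstep : CompositeStep g H α ψ x xp) :
    ⟪g, xp - x⟫ + ⟪H (xp - x), xp - x⟫ + α * ‖xp - x‖ ^ 2 ≤ ψ x - ψ xp := by
  have := hstep x
  rw [← neg_sub xp x, inner_neg_right, inner_add_left, inner_add_left, real_inner_smul_left,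
    real_inner_self_eq_norm_sq] at this
  linarith

theorem CompositeStep.mul_norm_sub_le (hstep : CompositeStep g H α ψ x xp)
    (hs : IsSubgradAt ψ s x) (hH : ∀ u, 0 ≤ ⟪H u, u⟫) :
    α * ‖xp - x‖ ≤ ‖g + s‖ := by
  have hdesc := hstep.inner_add_le_sub
  have hsub := hs xp
  have hcs : -⟪g + s, xp - x⟫ ≤ ‖g + s‖ * ‖xp - x‖ := by
    have := real_inner_le_norm (g + s) (-(xp - x))
    rwa [inner_neg_right, norm_neg] at this
  rw [inner_add_left] at hcs
  have hsq : α * ‖xp - x‖ * ‖xp - x‖ ≤ ‖g + s‖ * ‖xp - x‖ := by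
    nlinarith [hH (xp - x)]
  rcases (norm_nonneg (xp - x)).eq_or_lt with hr | hr
  · rw [← hr, mul_zero]; exact norm_nonneg _
  · exact le_of_mul_le_mul_right hsq hr

end CompositeStep

/-- Absorbs the cubic Taylor error into the quadratic regularisation: `α r ≤ N` and
`α ≥ √(L N / 3) + β` force `L r / 3 ≤ α - β`. -/
theorem cubic_le_of_sqrt_add_le {L N α β r : ℝ} (hL : 0 ≤ L) (hα : 0 < α) (hβ : 0 ≤ β)
    (hr : 0 ≤ r) (hαr : α * r ≤ N) (h : √(L * N / 3) + β ≤ α) :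
    L * r ^ 3 / 6 ≤ (α - β) * r ^ 2 / 2 := by
  have hN : 0 ≤ N := (mul_nonneg hα.le hr).trans hαr
  have hσ := Real.sq_sqrt (show 0 ≤ L * N / 3 by positivity)
  have hσ0 := Real.sqrt_nonneg (L * N / 3)
  have hlin : L * r / 3 ≤ α - β := by
    refine le_of_mul_le_mul_left ?_ hα
    nlinarith [mul_le_mul_of_nonneg_left hαr hL]
  nlinarith [mul_le_mul_of_nonneg_right hlin (sq_nonneg r)]

theorem composite_step_functional_progress_general {n : ℕ}
    (f : EuclideanSpace ℝ (Fin n) → ℝ) (hf : ContDiff ℝ 2 f)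
    (L : ℝ) (hL : 0 < L)
    (hLip : ∀ x y, ‖hess f x - hess f y‖ ≤ L * ‖x - y‖)
    (ψ : EuclideanSpace ℝ (Fin n) → ℝ)
    (x xp s : EuclideanSpace ℝ (Fin n)) (hs : IsSubgradAt ψ s x)
    (H : EuclideanSpace ℝ (Fin n) →L[ℝ] EuclideanSpace ℝ (Fin n)) (hH : IsSymmPSD H)
    (β : ℝ) (hHerr : ‖H - hess f x‖ ≤ β)
    (α : ℝ) (hαpos : 0 < α)
    (hα : Real.sqrt (L * ‖gradient f x + s‖ / 3) + β ≤ α)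
    (hstep : CompositeStep (gradient f x) H α ψ x xp) :
    α / 2 * ‖xp - x‖ ^ 2 ≤ (f x + ψ x) - (f xp + ψ xp) := by
  have hdesc := hstep.inner_add_le_sub
  have htaylor := le_of_abs_le <| abs_taylor_remainder_le (hf.differentiable two_ne_zero)
    hf.differentiable_gradient (fun y => hLip y x) (xp - x)
  rw [add_sub_cancel] at htaylor
  have hhess := ContinuousLinearMap.inner_apply_le_of_norm_sub_le
    ((norm_sub_rev _ _).trans_le hHerr) (xp - x)
  have hcubic := cubic_le_of_sqrt_add_le hL.le hαpos ((norm_nonneg _).trans hHerr)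
    (norm_nonneg _) (hstep.mul_norm_sub_le hs hH.2) hα
  have hpsd := hH.2 (xp - x)
  unfold hess at hhess
  linarith

/-- Functional progress of the composite step: if `f` has `L`-Lipschitz Hessian,
`‖H − ∇²f(x)‖ ≤ β` and `α ≥ √(L‖∇f(x) + s‖/3) + β`, then
`F(x) − F(x⁺) ≥ (α/2)·‖x⁺ − x‖²` for `F = f + ψ`. -/
theorem composite_step_functional_progress {n : ℕ}
    (f : EuclideanSpace ℝ (Fin n) → ℝ) (hf : ContDiff ℝ 2 f)
    (L : ℝ) (hL : 0 < L)
    (hLip : ∀ x y, ‖hess f x - hess f y‖ ≤ L * ‖x - y‖)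
    (ψ : EuclideanSpace ℝ (Fin n) → ℝ) (hψ : ConvexOn ℝ Set.univ ψ)
    (x xp s : EuclideanSpace ℝ (Fin n)) (hs : IsSubgradAt ψ s x)
    (H : EuclideanSpace ℝ (Fin n) →L[ℝ] EuclideanSpace ℝ (Fin n)) (hH : IsSymmPSD H)
    (β : ℝ) (hβ : 0 ≤ β) (hHerr : ‖H - hess f x‖ ≤ β)
    (α : ℝ) (hαpos : 0 < α)
    (hα : Real.sqrt (L * ‖gradient f x + s‖ / 3) + β ≤ α)
    (hstep : CompositeStep (gradient f x) H α ψ x xp) :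
    α / 2 * ‖xp - x‖ ^ 2 ≤ (f x + ψ x) - (f xp + ψ xp) :=
  composite_step_functional_progress_general f hf L hL hLip ψ x xp s hs H hH β hHerr α hαpos hα
    hstep
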